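/- Let n ≥ 5, Z_n(x,y,z,a) be the 4-perturbed reciprocal matrix with x,y,z,a > 0, and w its Perron eigenvector. If 1 ≤ min{x,y} then w_1 ≥ w_3, so for every 3 ≤ i ≤ n-2 the edge (1,i) is in G_{Z_n(x,y,z,a),w}. -/
import Mathlib


/-- The reciprocal matrix `Z_n(x,y,z,a)`: all entries equal to one except
(in 1-based indexing) `(1,n-1) = y`, `(1,n) = x`, `(2,n-1) = a`, `(2,n) = z`
and the reciprocals at the transposed positions. -/
noncomputable def Zmat (n : ℕ) (x y z a : ℝ) : Matrix (Fin n) (Fin n) ℝ :=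
  fun i j =>
    if i.val = 0 ∧ j.val = n - 2 then y
    else if i.val = 0 ∧ j.val = n - 1 then x
    else if i.val = 1 ∧ j.val = n - 2 then a
    else if i.val = 1 ∧ j.val = n - 1 then z
    else if i.val = n - 2 ∧ j.val = 0 then y⁻¹
    else if i.val = n - 1 ∧ j.val = 0 then x⁻¹
    else if i.val = n - 2 ∧ j.val = 1 then a⁻¹
    else if i.val = n - 1 ∧ j.val = 1 then z⁻¹
    else 1

/-- if `1 ≤ min {x, y}` then `w_1 ≥ w_3`, so for every `3 ≤ i ≤ n-2`
the edge (1,i) is in `G_{Z_n(x,y,z,a),w}`. -/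
theorem zmat_edge_one_middle (n : ℕ) (hn : 5 ≤ n) (x y z a : ℝ)
    (hx : 0 < x) (hy : 0 < y) (hz : 0 < z) (ha : 0 < a)
    (r : ℝ) (w : Fin n → ℝ) (hw : ∀ i, 0 < w i)
    (heig : (Zmat n x y z a).mulVec w = r • w)
    (h1x : 1 ≤ x) (h1y : 1 ≤ y) :
    w ⟨2, by omega⟩ ≤ w ⟨0, by omega⟩ ∧
      ∀ (i : ℕ) (_hi3 : 3 ≤ i) (_hin : i ≤ n - 2), w ⟨i - 1, by omega⟩ ≤ w ⟨0, by omega⟩ := by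
  have hmid : ∀ (k : ℕ) (hk : k < n), 2 ≤ k → k ≤ n - 3 →
      r * w ⟨k, hk⟩ = ∑ j, w j := by
    intro k hk hk1 hk2
    have hke := congrFun heig ⟨k, hk⟩
    simp only [Matrix.mulVec, dotProduct, Pi.smul_apply, smul_eq_mul] at hke
    rw [← hke]
    apply Finset.sum_congr rfl
    intro j _
    have e0 : k ≠ 0 := by omega
    have e1 : k ≠ 1 := by omega
    have e2 : k ≠ n - 2 := by omega
    have e3 : k ≠ n - 1 := by omega
    have h1 : Zmat n x y z a ⟨k, hk⟩ j = 1 := by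
      simp [Zmat, e0, e1, e2, e3]
    rw [h1, one_mul]
  have hzero : (∑ j, w j) ≤ r * w ⟨0, by omega⟩ := by
    have hke := congrFun heig ⟨0, by omega⟩
    simp only [Matrix.mulVec, dotProduct, Pi.smul_apply, smul_eq_mul] at hke
    rw [← hke]
    apply Finset.sum_le_sum
    intro j _
    have e1 : (0 : ℕ) ≠ 1 := by omega
    have e2 : (0 : ℕ) ≠ n - 2 := by omega
    have e3 : (0 : ℕ) ≠ n - 1 := by omega
    have h1 : 1 ≤ Zmat n x y z a ⟨0, by omega⟩ j := by
      simp only [Zmat, Fin.mk.injEq]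
      split_ifs with c1 c2 <;> simp_all
    calc w j = 1 * w j := (one_mul _).symm
      _ ≤ Zmat n x y z a ⟨0, by omega⟩ j * w j :=
        mul_le_mul_of_nonneg_right h1 (hw j).le
  have hsum : 0 < ∑ j, w j := by
    have : Nonempty (Fin n) := ⟨⟨0, by omega⟩⟩
    exact Finset.sum_pos (fun j _ => hw j) Finset.univ_nonempty
  have h2 := hmid 2 (by omega) (by omega) (by omega)
  have hr : 0 < r := by nlinarith [hw ⟨2, by omega⟩]
  have key : ∀ (k : ℕ) (hk : k < n), 2 ≤ k → k ≤ n - 3 →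
      w ⟨k, hk⟩ ≤ w ⟨0, by omega⟩ := by
    intro k hk hk1 hk2
    have hle := (hmid k hk hk1 hk2).le.trans hzero
    exact le_of_mul_le_mul_left hle hr
  refine ⟨key 2 (by omega) (by omega) (by omega), fun i hi3 hin => ?_⟩
  exact key (i - 1) (by omega) (by omega) (by omega)
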